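/- Let A > 0, R > 0 and x ∈ [-R, R]. The 2×2 matrix function Ψ_2(x,k) = ((1, (A/(2ik)) e^{2ik(R-x)}), (0, 1)) solves the Volterra integral equation Ψ_2(x,k) = N_+(k) - ∫_x^R G_+(x,y,k) ((0, -A),(0,0)) Ψ_2(y,k) e^{ik(x-y)σ3} dy, where N_+(k) = ((1, A/(2ik)),(0,1)) and G_+(x,y,k) = ((e^{-ik(x-y)}, (A/(2ik))(e^{ik(x-y)} - e^{-ik(x-y)})), (0, e^{ik(x-y)})). -/

import Mathlib

/-! The matrix `((0,-A),(0,0))` only sees the first column of `G₊` and does not see the off-diagonal entry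
of `Ψ₂`, so the integrand collapses to the scalar `e^{2ik(y-x)}` times that matrix; integrating
the exponential gives `(e^{2ik(R-x)} - 1)/(2ik)`, which is exactly the correction turning `N₊`
into `Ψ₂`. -/

open Complex Matrix MeasureTheory

attribute [local instance] Matrix.frobeniusNormedAddCommGroup Matrix.frobeniusNormedSpace

/-- `N₊(k) = ((1, A/(2ik)), (0, 1))`. -/
noncomputable def Nplus (A : ℝ) (k : ℝ) : Matrix (Fin 2) (Fin 2) ℂ :=
  !![1, (A : ℂ) / (2 * Complex.I * (k : ℂ)); 0, 1]

/-- The Cauchy matrix `G₊(x,y,k)`. -/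
noncomputable def Gplus (A : ℝ) (k x y : ℝ) : Matrix (Fin 2) (Fin 2) ℂ :=
  !![Complex.exp (-Complex.I * (k : ℂ) * ((x : ℂ) - (y : ℂ))),
      (A : ℂ) / (2 * Complex.I * (k : ℂ)) *
        (Complex.exp (Complex.I * (k : ℂ) * ((x : ℂ) - (y : ℂ))) -
          Complex.exp (-Complex.I * (k : ℂ) * ((x : ℂ) - (y : ℂ))));
     0, Complex.exp (Complex.I * (k : ℂ) * ((x : ℂ) - (y : ℂ)))]

/-- The constant matrix `((0, -A), (0, 0))`. -/
noncomputable def Bmat (A : ℝ) : Matrix (Fin 2) (Fin 2) ℂ :=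
  !![0, -(A : ℂ); 0, 0]

/-- `e^{ik t σ₃} = diag(e^{ikt}, e^{-ikt})`. -/
noncomputable def Emat (k t : ℝ) : Matrix (Fin 2) (Fin 2) ℂ :=
  !![Complex.exp (Complex.I * (k : ℂ) * (t : ℂ)), 0;
     0, Complex.exp (-Complex.I * (k : ℂ) * (t : ℂ))]

/-- The explicit Jost matrix `Ψ₂(x,k) = ((1, (A/(2ik)) e^{2ik(R-x)}), (0, 1))`. -/
noncomputable def Psi2 (A R : ℝ) (k x : ℝ) : Matrix (Fin 2) (Fin 2) ℂ :=
  !![1, (A : ℂ) / (2 * Complex.I * (k : ℂ)) *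
        Complex.exp (2 * Complex.I * (k : ℂ) * ((R : ℂ) - (x : ℂ))); 0, 1]

theorem Gplus_mul_Bmat (A k x y : ℝ) :
    Gplus A k x y * Bmat A = exp (-I * k * ((x : ℂ) - y)) • Bmat A := by
  ext i j
  fin_cases i <;> fin_cases j <;> simp [Gplus, Bmat, Matrix.mul_apply, Fin.sum_univ_two, mul_comm]

theorem Bmat_mul_Psi2 (A R k x : ℝ) : Bmat A * Psi2 A R k x = Bmat A := by
  ext i j
  fin_cases i <;> fin_cases j <;> simp [Bmat, Psi2, Matrix.mul_apply, Fin.sum_univ_two]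

theorem Bmat_mul_Emat (A k t : ℝ) : Bmat A * Emat k t = exp (-I * k * t) • Bmat A := by
  ext i j
  fin_cases i <;> fin_cases j <;> simp [Bmat, Emat, Matrix.mul_apply, Fin.sum_univ_two, mul_comm]

theorem volterra_integrand_eq (A R k x y : ℝ) :
    Gplus A k x y * Bmat A * Psi2 A R k y * Emat k (x - y) =
      exp (2 * I * k * ((y : ℂ) - x)) • Bmat A := by
  rw [Gplus_mul_Bmat, smul_mul_assoc, Bmat_mul_Psi2, smul_mul_assoc, Bmat_mul_Emat, smul_smul,
    ← exp_add]
  push_cast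
  ring_nf

theorem integral_exp_two_I_mul_sub {k : ℝ} (hk : k ≠ 0) (x R : ℝ) :
    ∫ y in x..R, exp (2 * I * k * ((y : ℂ) - x)) =
      (exp (2 * I * k * ((R : ℂ) - x)) - 1) / (2 * I * k) := by
  have hc : (2 : ℂ) * I * k ≠ 0 := by simp [hk]
  have := intervalIntegral.integral_comp_sub_right (fun y : ℝ => exp (2 * I * k * (y : ℂ))) x
    (a := x) (b := R)
  simp only [ofReal_sub] at this
  rw [this, integral_exp_mul_complex hc]
  simp

theorem Psi2_eq_Nplus_sub_smul_Bmat (A R k x : ℝ) :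
    Psi2 A R k x =
      Nplus A k - ((exp (2 * I * k * ((R : ℂ) - x)) - 1) / (2 * I * k)) • Bmat A := by
  ext i j
  fin_cases i <;> fin_cases j <;> simp [Psi2, Nplus, Bmat]
  ring

theorem psi2_solves_volterra_general (A R : ℝ) (k : ℝ) (hk : k ≠ 0) (x : ℝ) :
    Psi2 A R k x =
      Nplus A k -
        ∫ y in x..R, Gplus A k x y * Bmat A * Psi2 A R k y * Emat k (x - y) := by
  simp_rw [volterra_integrand_eq, intervalIntegral.integral_smul_const,
    integral_exp_two_I_mul_sub hk]
  exact Psi2_eq_Nplus_sub_smul_Bmat A R k x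

/-- For `x ∈ [-R, R]`, the explicit matrix `Ψ₂(x,k)` solves the Volterra integral
equation `Ψ₂(x,k) = N₊(k) - ∫_x^R G₊(x,y,k) ((0,-A),(0,0)) Ψ₂(y,k) e^{ik(x-y)σ₃} dy`. -/
theorem psi2_solves_volterra (A R : ℝ) (hA : 0 < A) (hR : 0 < R)
    (k : ℝ) (hk : k ≠ 0) (x : ℝ) (hx : x ∈ Set.Icc (-R) R) :
    Psi2 A R k x =
      Nplus A k -
        ∫ y in x..R, Gplus A k x y * Bmat A * Psi2 A R k y * Emat k (x - y) :=
  psi2_solves_volterra_general A R k hk x
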